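/- Let u : ℝ × ℝ → ℝ be sufficiently smooth and satisfy the linear heat equation u_t = u_xx at every point. Then for every real ε, the function v(t,x) := (1+4εt)^{−1/2} · exp(−εx²/(1+4εt)) · u( t/(1+4εt), x/(1+4εt) ), defined on the set {(t,x) : 1+4εt > 0}, satisfies v_t = v_xx at every point of that set. (This is the finite projective transformation generated by the symmetry X₅ = 4t² ∂t + 4tx ∂x − (x² + 2t)u ∂u of the linear heat equation. In particular, taking u ≡ C constant and ε = 1/(4t₀) gives the exact solution u(t,x) = C (t₀/(t+t₀))^{1/2} exp(−x²/(4(t+t₀))).) -/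

import Mathlib

/-!
Write `D = 1 + 4εt`. By the chain rule, both `v_t` and `v_xx` at `(t, x)` equal
`D^(-1/2) e^(-εx²/D) ((4ε²x²/D² - 2ε/D) u - (4εx/D²) u_x + w/D²)`, evaluated at `(t/D, x/D)`,
with `w = u_t` for `v_t` and `w = u_xx` for `v_xx`; so the heat equation for `u` gives it for `v`.
-/

noncomputable section

/-- Partial derivative with respect to the first variable (time). -/
def pdT (f : ℝ × ℝ → ℝ) (t x : ℝ) : ℝ := deriv (fun s => f (s, x)) t

/-- Partial derivative with respect to the second variable (space). -/
def pdX (f : ℝ × ℝ → ℝ) (t x : ℝ) : ℝ := deriv (fun y => f (t, y)) x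

open Real

theorem pdT_eq_fderiv {f : ℝ × ℝ → ℝ} {t x : ℝ} (hf : DifferentiableAt ℝ f (t, x)) :
    pdT f t x = fderiv ℝ f (t, x) (1, 0) :=
  (hf.hasFDerivAt.comp_hasDerivAt t ((hasDerivAt_id t).prodMk (hasDerivAt_const t x))).deriv

theorem pdX_eq_fderiv {f : ℝ × ℝ → ℝ} {t x : ℝ} (hf : DifferentiableAt ℝ f (t, x)) :
    pdX f t x = fderiv ℝ f (t, x) (0, 1) :=
  (hf.hasFDerivAt.comp_hasDerivAt x ((hasDerivAt_const x t).prodMk (hasDerivAt_id x))).deriv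

theorem hasDerivAt_comp_prodMk {f : ℝ × ℝ → ℝ} {g h : ℝ → ℝ} {g' h' t : ℝ}
    (hf : DifferentiableAt ℝ f (g t, h t)) (hg : HasDerivAt g g' t) (hh : HasDerivAt h h' t) :
    HasDerivAt (fun s => f (g s, h s)) (g' * pdT f (g t) (h t) + h' * pdX f (g t) (h t)) t := by
  have hsplit : ((g', h') : ℝ × ℝ) = g' • ((1 : ℝ), (0 : ℝ)) + h' • ((0 : ℝ), (1 : ℝ)) := by
    simp
  have := hf.hasFDerivAt.comp_hasDerivAt t (hg.prodMk hh)
  rwa [hsplit, map_add, map_smul, map_smul, ← pdT_eq_fderiv hf, ← pdX_eq_fderiv hf] at this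

theorem differentiable_pdX {u : ℝ × ℝ → ℝ} (hu : ContDiff ℝ 2 u) (t : ℝ) :
    Differentiable ℝ (pdX u t) := by
  have hu₁ : Differentiable ℝ u := hu.differentiable two_ne_zero
  have hux : ContDiff ℝ 1 fun p => fderiv ℝ u p (0, 1) :=
    (hu.fderiv_right le_rfl).clm_apply contDiff_const
  have : pdX u t = fun y => fderiv ℝ u (t, y) (0, 1) := funext fun y => pdX_eq_fderiv (hu₁ _)
  rw [this]
  exact (hux.differentiable one_ne_zero).comp ((differentiable_const t).prodMk differentiable_id)

theorem hasDerivAt_gaussian_mul_comp_div (c ε D : ℝ) {w : ℝ → ℝ} {w' y : ℝ}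
    (hw : HasDerivAt w w' (y / D)) :
    HasDerivAt (fun y => c * exp (-ε * y ^ 2 / D) * w (y / D))
      (c * exp (-ε * y ^ 2 / D) * (-2 * ε * (y / D) * w (y / D) + w' / D)) y := by
  have hexp : HasDerivAt (fun y => exp (-ε * y ^ 2 / D))
      (exp (-ε * y ^ 2 / D) * (-ε * (2 * y ^ 1) / D)) y :=
    (((hasDerivAt_pow 2 y).const_mul (-ε)).div_const D).exp
  have hw_div : HasDerivAt (fun y => w (y / D)) (w' * (1 / D)) y :=
    hw.comp y ((hasDerivAt_id y).div_const D)
  refine ((hexp.const_mul c).mul hw_div).congr_deriv ?_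
  ring

theorem deriv_deriv_gaussian_mul_comp_div (c ε D x : ℝ) {w : ℝ → ℝ}
    (hw : Differentiable ℝ w) (hw' : Differentiable ℝ (deriv w)) :
    deriv (deriv fun y => c * exp (-ε * y ^ 2 / D) * w (y / D)) x =
      c * exp (-ε * x ^ 2 / D) *
        ((4 * ε ^ 2 * x ^ 2 / D ^ 2 - 2 * ε / D) * w (x / D)
          - 4 * ε * x / D ^ 2 * deriv w (x / D) + deriv (deriv w) (x / D) / D ^ 2) := by
  have hfirst : (deriv fun y => c * exp (-ε * y ^ 2 / D) * w (y / D)) =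
      fun y => c * exp (-ε * y ^ 2 / D) * (fun ξ => -2 * ε * ξ * w ξ + deriv w ξ / D) (y / D) :=
    funext fun y => (hasDerivAt_gaussian_mul_comp_div c ε D (hw _).hasDerivAt).deriv
  have hw₁ : HasDerivAt (fun ξ => -2 * ε * ξ * w ξ + deriv w ξ / D)
      (-2 * ε * 1 * w (x / D) + -2 * ε * (x / D) * deriv w (x / D)
        + deriv (deriv w) (x / D) / D) (x / D) :=
    (((hasDerivAt_id _).const_mul (-2 * ε)).mul (hw _).hasDerivAt).add
      ((hw' _).hasDerivAt.div_const D)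
  rw [hfirst, (hasDerivAt_gaussian_mul_comp_div c ε D hw₁).deriv]
  ring

def projectiveTransform (ε : ℝ) (u : ℝ × ℝ → ℝ) (p : ℝ × ℝ) : ℝ :=
  (1 + 4 * ε * p.1) ^ (-(1 / 2) : ℝ) * exp (-ε * p.2 ^ 2 / (1 + 4 * ε * p.1)) *
    u (p.1 / (1 + 4 * ε * p.1), p.2 / (1 + 4 * ε * p.1))

theorem pdT_projectiveTransform {u : ℝ × ℝ → ℝ} {ε t x : ℝ} (hD : 1 + 4 * ε * t ≠ 0)
    (hu : DifferentiableAt ℝ u (t / (1 + 4 * ε * t), x / (1 + 4 * ε * t))) :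
    pdT (projectiveTransform ε u) t x =
      (1 + 4 * ε * t) ^ (-(1 / 2) : ℝ) * exp (-ε * x ^ 2 / (1 + 4 * ε * t)) *
        ((4 * ε ^ 2 * x ^ 2 / (1 + 4 * ε * t) ^ 2 - 2 * ε / (1 + 4 * ε * t)) *
            u (t / (1 + 4 * ε * t), x / (1 + 4 * ε * t))
          - 4 * ε * x / (1 + 4 * ε * t) ^ 2 * pdX u (t / (1 + 4 * ε * t)) (x / (1 + 4 * ε * t))
          + pdT u (t / (1 + 4 * ε * t)) (x / (1 + 4 * ε * t)) / (1 + 4 * ε * t) ^ 2) := by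
  have hD' : HasDerivAt (fun s => 1 + 4 * ε * s) (4 * ε) t := by
    simpa using ((hasDerivAt_id t).const_mul (4 * ε)).const_add 1
  have hpow := hD'.rpow_const (p := (-(1 / 2) : ℝ)) (Or.inl hD)
  have hexp := ((hasDerivAt_const t (-ε * x ^ 2)).div hD' hD).exp
  have hτ := (hasDerivAt_id t).div hD' hD
  have hξ := (hasDerivAt_const t x).div hD' hD
  refine ((hpow.mul hexp).mul (hasDerivAt_comp_prodMk hu hτ hξ)).deriv.trans ?_
  simp only [Pi.div_apply, Pi.mul_apply, id, rpow_sub_one hD]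
  field_simp
  ring

theorem deriv_pdX_projectiveTransform {u : ℝ × ℝ → ℝ} (hu : ContDiff ℝ 2 u) (ε t x : ℝ) :
    deriv (pdX (projectiveTransform ε u) t) x =
      (1 + 4 * ε * t) ^ (-(1 / 2) : ℝ) * exp (-ε * x ^ 2 / (1 + 4 * ε * t)) *
        ((4 * ε ^ 2 * x ^ 2 / (1 + 4 * ε * t) ^ 2 - 2 * ε / (1 + 4 * ε * t)) *
            u (t / (1 + 4 * ε * t), x / (1 + 4 * ε * t))
          - 4 * ε * x / (1 + 4 * ε * t) ^ 2 * pdX u (t / (1 + 4 * ε * t)) (x / (1 + 4 * ε * t))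
          + deriv (pdX u (t / (1 + 4 * ε * t))) (x / (1 + 4 * ε * t)) / (1 + 4 * ε * t) ^ 2) :=
  deriv_deriv_gaussian_mul_comp_div ((1 + 4 * ε * t) ^ (-(1 / 2) : ℝ)) ε (1 + 4 * ε * t) x
    (w := fun ξ => u (t / (1 + 4 * ε * t), ξ))
    ((hu.differentiable two_ne_zero).comp ((differentiable_const _).prodMk differentiable_id))
    (differentiable_pdX hu _)

/-- the finite projective transformation generated by
`X₅ = 4t² ∂t + 4tx ∂x − (x² + 2t)u ∂u` maps solutions of the linear heat
equation to solutions, on the set where `1 + 4εt > 0`. -/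
theorem projective_symmetry_linear_heat
    (u : ℝ × ℝ → ℝ) (hu : ContDiff ℝ 2 u)
    (heq : ∀ t x : ℝ, pdT u t x = deriv (fun y => pdX u t y) x) :
    ∀ ε : ℝ, ∀ t x : ℝ, 1 + 4 * ε * t > 0 →
      pdT (fun p => (1 + 4 * ε * p.1) ^ (-(1 / 2) : ℝ) *
          Real.exp (-ε * p.2 ^ 2 / (1 + 4 * ε * p.1)) *
          u (p.1 / (1 + 4 * ε * p.1), p.2 / (1 + 4 * ε * p.1))) t x =
        deriv (fun y =>
          pdX (fun p => (1 + 4 * ε * p.1) ^ (-(1 / 2) : ℝ) *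
            Real.exp (-ε * p.2 ^ 2 / (1 + 4 * ε * p.1)) *
            u (p.1 / (1 + 4 * ε * p.1), p.2 / (1 + 4 * ε * p.1))) t y) x := by
  intro ε t x hD
  change pdT (projectiveTransform ε u) t x = deriv (pdX (projectiveTransform ε u) t) x
  rw [pdT_projectiveTransform hD.ne' (hu.differentiable two_ne_zero _),
    deriv_pdX_projectiveTransform hu, heq]
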